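/- arXiv:2601.01228 — 2 statements merged into one kernel-verified Lean document; each statement's English description precedes it below -/
import Mathlib

section
/- Let A : ℝⁿ → ℝᵐ be linear, y ∈ ℝᵐ, s ∈ [0, 1/‖A‖²], λ ∈ (0,1), D : ℝⁿ → ℝⁿ a contraction with constant L < 1, and Ω : ℝⁿ → ℝⁿ nonexpansive. Then the map T(x) = Ω(λ·D(G(x)) + (1-λ)·G(x)), where G(x) = x - 2s·Aᵀ(Ax - y), is a contraction and hence has a unique fixed point x* ∈ ℝⁿ. -/
/-!
The gradient step `G x = x - 2s Aᵀ(Ax - y)` is nonexpansive when `s ‖A‖² ≤ 1`: expanding the square,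
`‖v - 2s AᵀAv‖² = ‖v‖² - 4s ‖Av‖² + 4s² ‖AᵀAv‖²`, and `‖AᵀAv‖ ≤ ‖A‖ ‖Av‖` makes the last two terms
sum to at most `0`. The relaxation `u ↦ λ D u + (1 - λ) u` is then Lipschitz with constant
`λ L + (1 - λ) < 1`, composing with the nonexpansive `Ω` keeps it below `1`, and Banach's fixed-point
theorem applies on the complete space `ℝⁿ`.
-/

open ContinuousLinearMap

section LeastSquares

variable {E F : Type*} [NormedAddCommGroup E] [InnerProductSpace ℝ E] [CompleteSpace E]
  [NormedAddCommGroup F] [InnerProductSpace ℝ F] [CompleteSpace F]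

/-- The gradient step of size `s` for the least-squares objective `x ↦ ‖A x - y‖²`. -/
noncomputable def leastSquaresStep (A : E →L[ℝ] F) (y : F) (s : ℝ) (x : E) : E :=
  x - (2 * s) • adjoint A (A x - y)

theorem norm_sub_two_smul_adjoint_apply_le {A : E →L[ℝ] F} {s : ℝ} (hs0 : 0 ≤ s)
    (hsA : s * ‖A‖ ^ 2 ≤ 1) (v : E) : ‖v - (2 * s) • adjoint A (A v)‖ ≤ ‖v‖ := by
  have hinner : inner ℝ v ((2 * s) • adjoint A (A v)) = 2 * s * ‖A v‖ ^ 2 := by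
    rw [real_inner_smul_right, real_inner_comm, adjoint_inner_left, real_inner_self_eq_norm_sq]
  have hadj : ‖adjoint A (A v)‖ ≤ ‖A‖ * ‖A v‖ := by
    simpa only [adjoint.norm_map] using (adjoint A).le_opNorm (A v)
  have hsq : ‖adjoint A (A v)‖ ^ 2 ≤ ‖A‖ ^ 2 * ‖A v‖ ^ 2 := by
    rw [← mul_pow]; exact pow_le_pow_left₀ (norm_nonneg _) hadj 2
  have hsquare : ‖v - (2 * s) • adjoint A (A v)‖ ^ 2 ≤ ‖v‖ ^ 2 := by
    rw [norm_sub_sq_real, hinner, norm_smul, mul_pow, Real.norm_eq_abs, sq_abs]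
    nlinarith [mul_le_mul_of_nonneg_left hsq (sq_nonneg (2 * s)),
      mul_le_mul_of_nonneg_left hsA (mul_nonneg hs0 (sq_nonneg ‖A v‖))]
  exact pow_le_pow_iff_left₀ (norm_nonneg _) (norm_nonneg _) two_ne_zero |>.mp hsquare

theorem lipschitzWith_one_leastSquaresStep {A : E →L[ℝ] F} (y : F) {s : ℝ} (hs0 : 0 ≤ s)
    (hsA : s * ‖A‖ ^ 2 ≤ 1) : LipschitzWith 1 (leastSquaresStep A y s) := by
  refine LipschitzWith.of_dist_le_mul fun x z => ?_
  have hdiff : leastSquaresStep A y s x - leastSquaresStep A y s z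
      = (x - z) - (2 * s) • adjoint A (A (x - z)) := by
    simp only [leastSquaresStep, map_sub, smul_sub]
    abel
  simpa only [dist_eq_norm, hdiff, NNReal.coe_one, one_mul]
    using norm_sub_two_smul_adjoint_apply_le hs0 hsA (x - z)

end LeastSquares

theorem LipschitzWith.convexCombination {X E : Type*} [PseudoMetricSpace X]
    [SeminormedAddCommGroup E] [NormedSpace ℝ E] {f g : X → E} {Kf Kg : NNReal} {a : ℝ}
    (ha0 : 0 ≤ a) (ha1 : a ≤ 1) (hf : LipschitzWith Kf f) (hg : LipschitzWith Kg g) :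
    LipschitzWith (a * Kf + (1 - a) * Kg).toNNReal fun x => a • f x + (1 - a) • g x := by
  refine LipschitzWith.of_dist_le' fun x z => ?_
  calc dist (a • f x + (1 - a) • g x) (a • f z + (1 - a) • g z)
      ≤ dist (a • f x) (a • f z) + dist ((1 - a) • g x) ((1 - a) • g z) := dist_add_add_le _ _ _ _
    _ = a * dist (f x) (f z) + (1 - a) * dist (g x) (g z) := by
      rw [dist_smul₀, dist_smul₀, Real.norm_of_nonneg ha0, Real.norm_of_nonneg (sub_nonneg.2 ha1)]
    _ ≤ a * (Kf * dist x z) + (1 - a) * (Kg * dist x z) :=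
      add_le_add (mul_le_mul_of_nonneg_left (hf.dist_le_mul x z) ha0)
        (mul_le_mul_of_nonneg_left (hg.dist_le_mul x z) (sub_nonneg.2 ha1))
    _ = (a * Kf + (1 - a) * Kg) * dist x z := by ring

theorem stmt4_general {n m : ℕ}
    (A : EuclideanSpace ℝ (Fin n) →L[ℝ] EuclideanSpace ℝ (Fin m))
    (y : EuclideanSpace ℝ (Fin m))
    (s : ℝ) (hs : s ∈ Set.Icc (0 : ℝ) (1 / ‖A‖ ^ 2))
    (lam : ℝ) (hlam : lam ∈ Set.Ioo (0 : ℝ) 1)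
    (D : EuclideanSpace ℝ (Fin n) → EuclideanSpace ℝ (Fin n))
    (L : ℝ) (hL : L < 1)
    (hD : ∀ x z, ‖D x - D z‖ ≤ L * ‖x - z‖)
    (Ω : EuclideanSpace ℝ (Fin n) → EuclideanSpace ℝ (Fin n))
    (hΩ : ∀ x z, ‖Ω x - Ω z‖ ≤ ‖x - z‖)
    (G T : EuclideanSpace ℝ (Fin n) → EuclideanSpace ℝ (Fin n))
    (hG : ∀ x, G x = x - (2 * s) • (ContinuousLinearMap.adjoint A) (A x - y))
    (hT : ∀ x, T x = Ω (lam • D (G x) + (1 - lam) • G x)) :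
    (∃ c : ℝ, c < 1 ∧ ∀ x z, ‖T x - T z‖ ≤ c * ‖x - z‖) ∧
    (∃! xstar : EuclideanSpace ℝ (Fin n), T xstar = xstar) := by
  obtain ⟨hs0, hs1⟩ := hs
  obtain ⟨hlam0, hlam1⟩ := hlam
  have hG_lip : LipschitzWith 1 G := by
    rw [show G = leastSquaresStep A y s from funext hG]
    exact lipschitzWith_one_leastSquaresStep y hs0 (mul_le_of_le_div₀ zero_le_one (by positivity) hs1)
  have hD_lip : LipschitzWith L.toNNReal D :=
    .of_dist_le' fun x z => by simpa only [dist_eq_norm] using hD x z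
  have hΩ_lip : LipschitzWith 1 Ω :=
    .of_dist_le_mul fun x z => by simpa only [dist_eq_norm, NNReal.coe_one, one_mul] using hΩ x z
  set K := (lam * L.toNNReal + (1 - lam) * (1 : NNReal)).toNNReal
  have hK : K < 1 := by
    have hL' : (L.toNNReal : ℝ) < 1 := NNReal.coe_lt_one.2 (Real.toNNReal_lt_one.2 hL)
    refine Real.toNNReal_lt_one.2 ?_
    rw [NNReal.coe_one, mul_one]
    nlinarith
  have hT_contr : ContractingWith K T := by
    refine ⟨hK, ?_⟩
    rw [show T = Ω ∘ (fun u => lam • D u + (1 - lam) • id u) ∘ G from funext hT]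
    simpa only [one_mul, mul_one] using
      hΩ_lip.comp ((hD_lip.convexCombination hlam0.le hlam1.le LipschitzWith.id).comp hG_lip)
  refine ⟨⟨K, hK, fun x z => ?_⟩, ⟨hT_contr.fixedPoint T, hT_contr.fixedPoint_isFixedPt,
    fun x hx => hT_contr.fixedPoint_unique hx⟩⟩
  simpa only [dist_eq_norm] using hT_contr.2.dist_le_mul x z

theorem stmt4 {n m : ℕ}
    (A : EuclideanSpace ℝ (Fin n) →L[ℝ] EuclideanSpace ℝ (Fin m))
    (y : EuclideanSpace ℝ (Fin m))
    (s : ℝ) (hs : s ∈ Set.Icc (0 : ℝ) (1 / ‖A‖ ^ 2))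
    (lam : ℝ) (hlam : lam ∈ Set.Ioo (0 : ℝ) 1)
    (D : EuclideanSpace ℝ (Fin n) → EuclideanSpace ℝ (Fin n))
    (L : ℝ) (hL0 : 0 ≤ L) (hL : L < 1)
    (hD : ∀ x z, ‖D x - D z‖ ≤ L * ‖x - z‖)
    (Ω : EuclideanSpace ℝ (Fin n) → EuclideanSpace ℝ (Fin n))
    (hΩ : ∀ x z, ‖Ω x - Ω z‖ ≤ ‖x - z‖)
    (G T : EuclideanSpace ℝ (Fin n) → EuclideanSpace ℝ (Fin n))
    (hG : ∀ x, G x = x - (2 * s) • (ContinuousLinearMap.adjoint A) (A x - y))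
    (hT : ∀ x, T x = Ω (lam • D (G x) + (1 - lam) • G x)) :
    (∃ c : ℝ, c < 1 ∧ ∀ x z, ‖T x - T z‖ ≤ c * ‖x - z‖) ∧
    (∃! xstar : EuclideanSpace ℝ (Fin n), T xstar = xstar) :=
  stmt4_general A y s hs lam hlam D L hL hD Ω hΩ G T hG hT
end

section
/- Let N(v) = Ω(λ·D(v) + (1-λ)·v) where D is L-Lipschitz with L < 1, λ ∈ (0,1), and Ω is nonexpansive, and let G(x) = x - 2s·Aᵀ(Ax - y) with 0 ≤ s ≤ 1/‖A‖². Then the HyDRA map x ↦ N(G(x)) is Lipschitz with constant at most λL + (1-λ), independent of y. -/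
/-!
The data-consistency step `x ↦ x - t • A†(A x - y)` maps increments `v = x - z` to
`v - t A†A v`, independently of `y`; expanding the square,
`‖v - t A†A v‖² ≤ ‖v‖² - t (2 - t‖A‖²) ‖A v‖²`, so it is nonexpansive once `t ‖A‖² ≤ 2`.
The relaxation `v ↦ λ D v + (1 - λ) v` is `(λL + 1 - λ)`-Lipschitz by the triangle inequality,
and composing with the nonexpansive `Ω` keeps that constant.
-/

open ContinuousLinearMap

section GradientStep

variable {E F : Type*} [NormedAddCommGroup E] [InnerProductSpace ℝ E] [CompleteSpace E]
  [NormedAddCommGroup F] [InnerProductSpace ℝ F] [CompleteSpace F]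

theorem norm_sub_smul_adjoint_apply_le (T : E →L[ℝ] F) {t : ℝ} (ht0 : 0 ≤ t)
    (ht : t * ‖T‖ ^ 2 ≤ 2) (v : E) : ‖v - t • adjoint T (T v)‖ ≤ ‖v‖ := by
  have h_inner : inner ℝ v (adjoint T (T v)) = ‖T v‖ ^ 2 := by
    rw [adjoint_inner_right, real_inner_self_eq_norm_sq]
  have h_norm : ‖adjoint T (T v)‖ ≤ ‖T‖ * ‖T v‖ := by
    simpa only [adjoint.norm_map] using (adjoint T).le_opNorm (T v)
  have h_sq : ‖t • adjoint T (T v)‖ ^ 2 ≤ t ^ 2 * ‖T‖ ^ 2 * ‖T v‖ ^ 2 := by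
    rw [norm_smul_of_nonneg ht0, mul_pow]
    nlinarith [pow_le_pow_left₀ (norm_nonneg _) h_norm 2]
  rw [← sq_le_sq₀ (norm_nonneg _) (norm_nonneg _), norm_sub_sq_real, real_inner_smul_right,
    h_inner]
  nlinarith [mul_nonneg (mul_nonneg ht0 (sub_nonneg.2 ht)) (sq_nonneg ‖T v‖)]

theorem norm_gradientStep_sub_le (T : E →L[ℝ] F) (y : F) {t : ℝ} (ht0 : 0 ≤ t)
    (ht : t * ‖T‖ ^ 2 ≤ 2) (x z : E) :
    ‖(x - t • adjoint T (T x - y)) - (z - t • adjoint T (T z - y))‖ ≤ ‖x - z‖ := by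
  have h_affine : (x - t • adjoint T (T x - y)) - (z - t • adjoint T (T z - y)) =
      (x - z) - t • adjoint T (T (x - z)) := by
    simp only [map_sub, smul_sub]
    abel
  rw [h_affine]
  exact norm_sub_smul_adjoint_apply_le T ht0 ht (x - z)

end GradientStep

theorem norm_relaxation_sub_le {E : Type*} [SeminormedAddCommGroup E] [NormedSpace ℝ E]
    {D : E → E} {L : ℝ} (hD : ∀ x z, ‖D x - D z‖ ≤ L * ‖x - z‖)
    {lam : ℝ} (hlam0 : 0 ≤ lam) (hlam1 : lam ≤ 1) (x z : E) :
    ‖(lam • D x + (1 - lam) • x) - (lam • D z + (1 - lam) • z)‖ ≤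
      (lam * L + (1 - lam)) * ‖x - z‖ :=
  calc ‖(lam • D x + (1 - lam) • x) - (lam • D z + (1 - lam) • z)‖
      = ‖lam • (D x - D z) + (1 - lam) • (x - z)‖ := by
        congr 1
        simp only [smul_sub]
        abel
    _ ≤ lam * ‖D x - D z‖ + (1 - lam) * ‖x - z‖ := by
        grw [norm_add_le, norm_smul_of_nonneg hlam0, norm_smul_of_nonneg (sub_nonneg.2 hlam1)]
    _ ≤ lam * (L * ‖x - z‖) + (1 - lam) * ‖x - z‖ := by
        grw [hD x z]
    _ = (lam * L + (1 - lam)) * ‖x - z‖ := by ring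

theorem stmt17_general {n m : ℕ}
    (A : EuclideanSpace ℝ (Fin n) →L[ℝ] EuclideanSpace ℝ (Fin m))
    (y : EuclideanSpace ℝ (Fin m))
    (s : ℝ) (hs0 : 0 ≤ s) (hs1 : s ≤ 1 / ‖A‖ ^ 2)
    (lam : ℝ) (hlam : lam ∈ Set.Ioo (0 : ℝ) 1)
    (D : EuclideanSpace ℝ (Fin n) → EuclideanSpace ℝ (Fin n))
    (L : ℝ) (hL0 : 0 ≤ L)
    (hD : ∀ x z, ‖D x - D z‖ ≤ L * ‖x - z‖)
    (Ω : EuclideanSpace ℝ (Fin n) → EuclideanSpace ℝ (Fin n))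
    (hΩ : ∀ x z, ‖Ω x - Ω z‖ ≤ ‖x - z‖)
    (N : EuclideanSpace ℝ (Fin n) → EuclideanSpace ℝ (Fin n))
    (hN : ∀ v, N v = Ω (lam • D v + (1 - lam) • v))
    (G : EuclideanSpace ℝ (Fin n) → EuclideanSpace ℝ (Fin n))
    (hG : ∀ x, G x = x - (2 * s) • (ContinuousLinearMap.adjoint A) (A x - y)) :
    ∀ x z, ‖N (G x) - N (G z)‖ ≤ (lam * L + (1 - lam)) * ‖x - z‖ := by
  intro x z
  obtain ⟨hlam0, hlam1⟩ := hlam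
  have hsA : s * ‖A‖ ^ 2 ≤ 1 := mul_le_of_le_div₀ zero_le_one (by positivity) hs1
  have hG_le : ‖G x - G z‖ ≤ ‖x - z‖ := by
    rw [hG, hG]
    exact norm_gradientStep_sub_le A y (by positivity) (by linarith) x z
  have hc0 : 0 ≤ lam * L + (1 - lam) := by nlinarith
  calc ‖N (G x) - N (G z)‖
      ≤ ‖(lam • D (G x) + (1 - lam) • G x) - (lam • D (G z) + (1 - lam) • G z)‖ := by
        rw [hN, hN]
        exact hΩ _ _
    _ ≤ (lam * L + (1 - lam)) * ‖G x - G z‖ :=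
        norm_relaxation_sub_le hD hlam0.le hlam1.le _ _
    _ ≤ (lam * L + (1 - lam)) * ‖x - z‖ := by gcongr

theorem stmt17 {n m : ℕ}
    (A : EuclideanSpace ℝ (Fin n) →L[ℝ] EuclideanSpace ℝ (Fin m))
    (y : EuclideanSpace ℝ (Fin m))
    (s : ℝ) (hs0 : 0 ≤ s) (hs1 : s ≤ 1 / ‖A‖ ^ 2)
    (lam : ℝ) (hlam : lam ∈ Set.Ioo (0 : ℝ) 1)
    (D : EuclideanSpace ℝ (Fin n) → EuclideanSpace ℝ (Fin n))
    (L : ℝ) (hL0 : 0 ≤ L) (hL : L < 1)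
    (hD : ∀ x z, ‖D x - D z‖ ≤ L * ‖x - z‖)
    (Ω : EuclideanSpace ℝ (Fin n) → EuclideanSpace ℝ (Fin n))
    (hΩ : ∀ x z, ‖Ω x - Ω z‖ ≤ ‖x - z‖)
    (N : EuclideanSpace ℝ (Fin n) → EuclideanSpace ℝ (Fin n))
    (hN : ∀ v, N v = Ω (lam • D v + (1 - lam) • v))
    (G : EuclideanSpace ℝ (Fin n) → EuclideanSpace ℝ (Fin n))
    (hG : ∀ x, G x = x - (2 * s) • (ContinuousLinearMap.adjoint A) (A x - y)) :
    ∀ x z, ‖N (G x) - N (G z)‖ ≤ (lam * L + (1 - lam)) * ‖x - z‖ :=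
  stmt17_general A y s hs0 hs1 lam hlam D L hL0 hD Ω hΩ N hN G hG
end
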